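/- arXiv:1103.2093 — 2 statements merged into one kernel-verified Lean document; each statement's English description precedes it below -/
import Mathlib

section
/- If Δ ⊆ ℝ^d is a Q-reflexive polytope, then its dual Δ° := [Δ]* is a Q-reflexive polytope and (Δ°)° = Δ; thus Δ ↦ Δ° is an involution on the set of Q-reflexive polytopes in ℝ^d. -/
open Pointwise

noncomputable section

/-- The standard inner product on `n → ℝ`. -/
def dot {n : Type*} [Fintype n] (x y : n → ℝ) : ℝ := ∑ i, x i * y i

/-- The lattice points of `n → ℝ`: points with integer coordinates. -/
def latt (n : Type*) [Fintype n] : Set (n → ℝ) := {x | ∀ i, ∃ m : ℤ, x i = (m : ℝ)}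

/-- Polar dual `S* = {y | ⟨x,y⟩ ≥ -1 ∀ x ∈ S}`. -/
def polarDual {n : Type*} [Fintype n] (S : Set (n → ℝ)) : Set (n → ℝ) :=
  {y | ∀ x ∈ S, -1 ≤ dot x y}

/-- `[S]`: the convex hull of the lattice points of `S`. -/
def latticeHull {n : Type*} [Fintype n] (S : Set (n → ℝ)) : Set (n → ℝ) :=
  convexHull ℝ (S ∩ latt n)

/-- A polytope: the convex hull of a finite set. -/
def IsPolytope {n : Type*} [Fintype n] (P : Set (n → ℝ)) : Prop :=
  ∃ F : Set (n → ℝ), F.Finite ∧ P = convexHull ℝ F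

/-- A lattice polytope: the convex hull of a finite set of lattice points. -/
def IsLatticePolytope {n : Type*} [Fintype n] (P : Set (n → ℝ)) : Prop :=
  ∃ F : Set (n → ℝ), F.Finite ∧ F ⊆ latt n ∧ P = convexHull ℝ F

/-- A full-dimensional polytope `P` with `0` in its interior is Q-reflexive if
`[[P]*] = P*`. -/
def IsQReflexive {n : Type*} [Fintype n] (P : Set (n → ℝ)) : Prop :=
  IsPolytope P ∧ 0 ∈ interior P ∧ latticeHull (polarDual (latticeHull P)) = polarDual P

/-- A full-dimensional lattice polytope `P` with `0` in its interior is almost reflexive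
if `[[P*]*] = P`. -/
def IsAlmostReflexive {n : Type*} [Fintype n] (P : Set (n → ℝ)) : Prop :=
  IsLatticePolytope P ∧ 0 ∈ interior P ∧
    latticeHull (polarDual (latticeHull (polarDual P))) = P

/-- A full-dimensional lattice polytope `P` with `0` in its interior is reflexive
if `P*` is a lattice polytope. -/
def IsReflexive {n : Type*} [Fintype n] (P : Set (n → ℝ)) : Prop :=
  IsLatticePolytope P ∧ 0 ∈ interior P ∧ IsLatticePolytope (polarDual P)

/-! The bipolar theorem gives `Δ** = Δ` and `[Δ]** = [Δ]`, so for `K = [Δ]*` the hypothesis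
`[K] = Δ*` yields `[K]* = Δ` and `[[K]*] = [Δ] = K*`. What remains is that `K` is a polytope with
`0` in its interior. As `K` is cut out by the finitely many lattice points of `Δ`, `0` is interior
and an extreme point of `K` is determined by its active constraints, so there are finitely many and
Krein–Milman makes `K` a polytope as soon as it is bounded. Boundedness comes from the lattice: the
lattice points of `K` lie in `[K] = Δ*`, which is bounded, whereas an unbounded closed convex
neighbourhood of `0` contains a cylinder around a ray and hence, by simultaneous Dirichlet
approximation, lattice points arbitrarily far out. -/

open Bornology Filter Topology

lemma exists_norm_eq_one_forall_smul_mem_of_not_isBounded {E : Type*} [NormedAddCommGroup E]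
    [NormedSpace ℝ E] [ProperSpace E] {K : Set E} (hconv : Convex ℝ K) (hcl : IsClosed K)
    (h0 : 0 ∈ K) (hK : ¬IsBounded K) : ∃ v : E, ‖v‖ = 1 ∧ ∀ t : ℝ, 0 ≤ t → t • v ∈ K := by
  simp only [isBounded_iff_forall_norm_le, not_exists, not_forall, not_le] at hK
  choose y hyK hy using fun N : ℕ => hK N
  have hpos : ∀ N, 0 < ‖y N‖ := fun N => (Nat.cast_nonneg N).trans_lt (hy N)
  obtain ⟨v, hv, φ, hφ, hlim⟩ := (isCompact_sphere (0 : E) 1).tendsto_subseq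
    (x := fun N => ‖y N‖⁻¹ • y N) fun N => by simp [norm_smul, (hpos N).ne']
  refine ⟨v, by simpa using hv, fun t ht => hcl.mem_of_tendsto (hlim.const_smul t) ?_⟩
  have hlarge : ∀ᶠ k in atTop, t ≤ ‖y (φ k)‖ :=
    ((tendsto_natCast_atTop_atTop.comp hφ.tendsto_atTop).eventually_ge_atTop t).mono
      fun k hk => hk.trans (hy _).le
  filter_upwards [hlarge] with k hk
  rw [Function.comp_apply, smul_smul, ← div_eq_mul_inv]
  exact hconv.smul_mem_of_zero_mem h0 (hyK _) ⟨by positivity, (div_le_one (hpos _)).2 hk⟩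

section PolarDual

variable {n : Type*} [Fintype n]

lemma dot_eq_dotProduct (x y : n → ℝ) : dot x y = x ⬝ᵥ y := rfl

lemma polarDual_eq_biInter (S : Set (n → ℝ)) :
    polarDual S = ⋂ x ∈ S, {y | -1 ≤ x ⬝ᵥ y} := by
  ext y; simp [polarDual, dot_eq_dotProduct]

lemma polarDual_anti {S T : Set (n → ℝ)} (h : S ⊆ T) : polarDual T ⊆ polarDual S :=
  fun _ hy x hx => hy x (h hx)

lemma isClosed_polarDual (S : Set (n → ℝ)) : IsClosed (polarDual S) := by
  rw [polarDual_eq_biInter]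
  exact isClosed_biInter fun x _ => isClosed_le continuous_const (by fun_prop)

lemma convex_polarDual (S : Set (n → ℝ)) : Convex ℝ (polarDual S) := by
  rw [polarDual_eq_biInter]
  exact convex_iInter₂ fun x _ =>
    convex_halfSpace_ge ⟨dotProduct_add x, fun c y => dotProduct_smul c x y⟩ _

lemma polarDual_convexHull (S : Set (n → ℝ)) :
    polarDual (convexHull ℝ S) = polarDual S := by
  refine (polarDual_anti (subset_convexHull ℝ S)).antisymm fun y hy => ?_
  have hconv : Convex ℝ {x : n → ℝ | -1 ≤ x ⬝ᵥ y} :=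
    convex_halfSpace_ge ⟨fun a b => add_dotProduct a b y, fun c x => smul_dotProduct c x y⟩ _
  exact fun x hx => convexHull_min (fun z hz => hy z hz) hconv hx

lemma subset_polarDual_polarDual (S : Set (n → ℝ)) : S ⊆ polarDual (polarDual S) :=
  fun x hx y hy => by rw [dot_eq_dotProduct, dotProduct_comm]; exact hy x hx

lemma polarDual_polarDual {S : Set (n → ℝ)} (hconv : Convex ℝ S) (hcl : IsClosed S)
    (h0 : 0 ∈ S) : polarDual (polarDual S) = S := by
  classical
  refine subset_antisymm (fun z hz => ?_) (subset_polarDual_polarDual S)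
  by_contra hzS
  obtain ⟨f, u, hfS, hfz⟩ := geometric_hahn_banach_closed_point hconv hcl hzS
  have hu : 0 < u := by simpa using hfS 0 h0
  set a := (dotProductEquiv ℝ n).symm f.toLinearMap
  have hfa : ∀ x, f x = x ⬝ᵥ a := fun x => by
    rw [dotProduct_comm]
    exact (LinearMap.congr_fun ((dotProductEquiv ℝ n).apply_symm_apply f.toLinearMap) x).symm
  have hy : (-u⁻¹) • a ∈ polarDual S := fun x hx => by
    rw [dot_eq_dotProduct, dotProduct_smul, smul_eq_mul, ← hfa]
    have := (inv_mul_lt_one₀ hu).2 (hfS x hx)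
    linarith
  have hzy := hz _ hy
  rw [dot_eq_dotProduct, dotProduct_comm, dotProduct_smul, smul_eq_mul, ← hfa] at hzy
  have := (one_lt_inv_mul₀ hu).2 hfz
  linarith

lemma isOpen_setOf_forall_lt_dot {G : Set (n → ℝ)} (hG : G.Finite) :
    IsOpen {y : n → ℝ | ∀ x ∈ G, -1 < x ⬝ᵥ y} := by
  simpa only [Set.ofPred_forall] using
    hG.isOpen_biInter fun x _ => isOpen_lt continuous_const (by fun_prop)

lemma zero_mem_interior_polarDual {G : Set (n → ℝ)} (hG : G.Finite) :
    (0 : n → ℝ) ∈ interior (polarDual G) :=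
  mem_interior.2 ⟨_, fun y hy x hx => (hy x hx).le, isOpen_setOf_forall_lt_dot hG,
    fun x _ => by simp⟩

lemma isBounded_polarDual_of_mem_nhds {S : Set (n → ℝ)} (hS : S ∈ 𝓝 0) :
    IsBounded (polarDual S) := by
  classical
  obtain ⟨ε, hε, hball⟩ := Metric.mem_nhds_iff.1 hS
  refine isBounded_iff_forall_norm_le.2 ⟨2 / ε, fun y hy =>
    (pi_norm_le_iff_of_nonneg (by positivity)).2 fun i => ?_⟩
  have hsingle : ∀ c : ℝ, |c| < ε → -1 ≤ c * y i := fun c hc => by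
    simpa [dot_eq_dotProduct] using hy (Pi.single i c) (hball (by simpa [Pi.norm_single] using hc))
  have h₁ := hsingle (ε / 2) (by rw [abs_of_pos (by positivity)]; linarith)
  have h₂ := hsingle (-(ε / 2)) (by rw [abs_neg, abs_of_pos (by positivity)]; linarith)
  rw [Real.norm_eq_abs, le_div_iff₀ hε]
  cases abs_cases (y i) <;> nlinarith

lemma exists_pos_add_smul_mem_polarDual {G : Set (n → ℝ)} (hG : G.Finite) {y v : n → ℝ}
    (hy : y ∈ polarDual G) (hv : ∀ x ∈ G, x ⬝ᵥ y = -1 → x ⬝ᵥ v = 0) :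
    ∃ t > 0, ∀ s : ℝ, |s| ≤ t → y + s • v ∈ polarDual G := by
  set I := {x ∈ G | x ⬝ᵥ y ≠ -1}
  have hU : {z | ∀ x ∈ I, -1 < x ⬝ᵥ z} ∈ 𝓝 y :=
    (isOpen_setOf_forall_lt_dot (hG.subset (Set.sep_subset _ _))).mem_nhds fun x hx =>
      (hy x hx.1).lt_of_ne' hx.2
  have hline : Tendsto (fun s : ℝ => y + s • v) (𝓝 0) (𝓝 y) := by
    have : Continuous fun s : ℝ => y + s • v := by fun_prop
    simpa using this.tendsto 0
  obtain ⟨r, hr, hball⟩ := Metric.mem_nhds_iff.1 (hline hU)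
  refine ⟨r / 2, by positivity, fun s hs x hx => ?_⟩
  rw [dot_eq_dotProduct]
  by_cases hxy : x ⬝ᵥ y = -1
  · simp [dotProduct_add, dotProduct_smul, hxy, hv x hx hxy]
  · exact (hball (by rw [Metric.mem_ball, dist_zero_right, Real.norm_eq_abs]; linarith)
      x ⟨hx, hxy⟩).le

lemma injOn_extremePoints_polarDual {G : Set (n → ℝ)} (hG : G.Finite) :
    Set.InjOn (fun y => {x ∈ G | x ⬝ᵥ y = -1}) ((polarDual G).extremePoints ℝ) := by
  intro y hy y' _ hactive
  have hv : ∀ x ∈ G, x ⬝ᵥ y = -1 → x ⬝ᵥ (y' - y) = 0 := fun x hx hxy => by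
    rw [dotProduct_sub, ((Set.ext_iff.1 hactive x).1 ⟨hx, hxy⟩).2, hxy, sub_self]
  obtain ⟨t, ht, hmem⟩ := exists_pos_add_smul_mem_polarDual hG hy.1 hv
  have hseg : y ∈ openSegment ℝ (y + (-t) • (y' - y)) (y + t • (y' - y)) :=
    ⟨1 / 2, 1 / 2, by norm_num, by norm_num, by norm_num, by module⟩
  have hends := (mem_extremePoints.1 hy).2 _ (hmem _ (by rw [abs_neg, abs_of_pos ht]))
    _ (hmem _ (by rw [abs_of_pos ht])) hseg
  have htv : t • (y' - y) = 0 := by simpa using hends.2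
  exact (sub_eq_zero.1 ((smul_eq_zero.1 htv).resolve_left ht.ne')).symm

lemma finite_extremePoints_polarDual {G : Set (n → ℝ)} (hG : G.Finite) :
    ((polarDual G).extremePoints ℝ).Finite :=
  Set.Finite.of_finite_image
    (hG.finite_subsets.subset (by rintro _ ⟨y, -, rfl⟩; exact Set.sep_subset _ _))
    (injOn_extremePoints_polarDual hG)

lemma isPolytope_polarDual {G : Set (n → ℝ)} (hG : G.Finite) (hb : IsBounded (polarDual G)) :
    IsPolytope (polarDual G) := by
  have hcomp := Metric.isCompact_of_isClosed_isBounded (isClosed_polarDual G) hb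
  have hfin := finite_extremePoints_polarDual hG
  exact ⟨_, hfin, (closure_convexHull_extremePoints hcomp (convex_polarDual G)).symm.trans
    (hfin.isCompact_convexHull (𝕜 := ℝ)).isClosed.closure_eq⟩

end PolarDual

section Lattice

variable {n : Type*} [Fintype n]

lemma zero_mem_latt : (0 : n → ℝ) ∈ latt n := fun _ => ⟨0, by simp⟩

lemma intCast_mem_latt (m : n → ℤ) : (fun i => (m i : ℝ)) ∈ latt n := fun i => ⟨m i, rfl⟩

lemma Bornology.IsBounded.finite_inter_latt {S : Set (n → ℝ)} (hS : IsBounded S) :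
    (S ∩ latt n).Finite := by
  obtain ⟨C, hC⟩ := hS.exists_norm_le
  refine ((Set.Finite.pi fun _ : n => Set.finite_Icc (-⌈C⌉) ⌈C⌉).image
    fun m i => (m i : ℝ)).subset fun x ⟨hxS, hxl⟩ => ?_
  choose m hm using hxl
  refine ⟨m, fun i _ => ?_, funext fun i => (hm i).symm⟩
  have hxi : |(m i : ℝ)| ≤ C := hm i ▸ (norm_le_pi_norm x i).trans (hC x hxS)
  obtain ⟨hlo, hhi⟩ := abs_le.1 hxi
  refine Set.mem_Icc.2 ⟨?_, ?_⟩ <;> rw [← Int.cast_le (R := ℝ)] <;> push_cast <;>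
    linarith [Int.le_ceil C]

/-- Simultaneous Dirichlet approximation: by compactness of `[0,1]ⁿ`, two of the vectors of
fractional parts of `N • v` are `δ`-close. -/
lemma exists_nat_smul_sub_intCast_lt (v : n → ℝ) {δ : ℝ} (hδ : 0 < δ) :
    ∃ t : ℕ, 1 ≤ t ∧ ∃ m : n → ℤ, ‖(t : ℝ) • v - fun i => (m i : ℝ)‖ < δ := by
  set u : ℕ → n → ℝ := fun N i => Int.fract ((N : ℝ) * v i)
  have hu : ∀ N, u N ∈ Set.univ.pi fun _ => Set.Icc (0 : ℝ) 1 := fun N i _ =>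
    ⟨Int.fract_nonneg _, (Int.fract_lt_one _).le⟩
  obtain ⟨p, -, φ, hφ, hlim⟩ := (isCompact_univ_pi fun _ => isCompact_Icc).tendsto_subseq hu
  obtain ⟨N, hN⟩ := Metric.cauchySeq_iff'.1 hlim.cauchySeq δ hδ
  have hlt : φ N < φ (N + 1) := hφ (Nat.lt_succ_self N)
  refine ⟨φ (N + 1) - φ N, by omega, fun i => ⌊(φ (N + 1) : ℝ) * v i⌋ - ⌊(φ N : ℝ) * v i⌋, ?_⟩
  have hdiff : ((φ (N + 1) - φ N : ℕ) : ℝ) • v - (fun i => ((⌊(φ (N + 1) : ℝ) * v i⌋ -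
      ⌊(φ N : ℝ) * v i⌋ : ℤ) : ℝ)) = u (φ (N + 1)) - u (φ N) := by
    ext i
    simp only [u, Int.fract, Pi.sub_apply, Pi.smul_apply, smul_eq_mul, Nat.cast_sub hlt.le,
      Int.cast_sub]
    ring
  rw [hdiff, ← dist_eq_norm]
  exact hN (N + 1) (Nat.le_succ N)

lemma exists_latt_near_ray (v : n → ℝ) {δ : ℝ} (hδ : 0 < δ) (T : ℝ) :
    ∃ t ≥ T, ∃ w ∈ latt n, ‖w - t • v‖ < δ := by
  obtain ⟨s, hs, m, hm⟩ := exists_nat_smul_sub_intCast_lt ((⌈T⌉₊ : ℝ) • v) hδ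
  refine ⟨s * ⌈T⌉₊, ?_, _, intCast_mem_latt m, ?_⟩
  · exact (Nat.le_ceil T).trans
      (le_mul_of_one_le_left (Nat.cast_nonneg _) (by exact_mod_cast hs))
  · rwa [norm_sub_rev, mul_smul]

/-- A closed convex neighbourhood of `0` that is unbounded contains a half-cylinder around a ray,
and hence lattice points arbitrarily far out. -/
lemma isBounded_of_isBounded_inter_latt {K : Set (n → ℝ)} (hconv : Convex ℝ K)
    (hcl : IsClosed K) (h0 : K ∈ 𝓝 0) (hlatt : IsBounded (K ∩ latt n)) : IsBounded K := by
  by_contra hK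
  obtain ⟨v, hv, hray⟩ :=
    exists_norm_eq_one_forall_smul_mem_of_not_isBounded hconv hcl (mem_of_mem_nhds h0) hK
  obtain ⟨ε, hε, hball⟩ := Metric.mem_nhds_iff.1 h0
  obtain ⟨R, hR⟩ := hlatt.exists_norm_le
  obtain ⟨t, ht, w, hw, hwt⟩ := exists_latt_near_ray v (half_pos hε) (max R 0 + ε)
  have ht0 : 0 ≤ t := by linarith [le_max_right R 0]
  have hwK : w ∈ K := by
    have hw : w = (1 / 2 : ℝ) • ((2 * t) • v) + (1 / 2 : ℝ) • ((2 : ℝ) • (w - t • v)) := by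
      module
    rw [hw]
    refine hconv (hray _ (by positivity)) (hball ?_) (by norm_num) (by norm_num) (by norm_num)
    rw [mem_ball_zero_iff, norm_smul, Real.norm_two]
    linarith
  have htv : ‖t • v‖ - ‖w‖ ≤ ‖w - t • v‖ := norm_sub_rev w (t • v) ▸ norm_sub_norm_le _ _
  rw [norm_smul, hv, mul_one, Real.norm_of_nonneg ht0] at htv
  linarith [hR w ⟨hwK, hw⟩, le_max_left R 0]

lemma polarDual_latticeHull (S : Set (n → ℝ)) :
    polarDual (latticeHull S) = polarDual (S ∩ latt n) :=
  polarDual_convexHull _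

lemma polarDual_polarDual_latticeHull {S : Set (n → ℝ)} (hS : IsBounded S) (h0 : 0 ∈ S) :
    polarDual (polarDual (latticeHull S)) = latticeHull S :=
  polarDual_polarDual (convex_convexHull ℝ _)
    (hS.finite_inter_latt.isCompact_convexHull (𝕜 := ℝ)).isClosed
    (subset_convexHull ℝ _ ⟨h0, zero_mem_latt⟩)

end Lattice

theorem qreflexive_dual_involution_general {d : ℕ} (Δ : Set (Fin d → ℝ))
    (h : IsQReflexive Δ) :
    IsQReflexive (polarDual (latticeHull Δ)) ∧
      polarDual (latticeHull (polarDual (latticeHull Δ))) = Δ := by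
  obtain ⟨⟨F, hF, hΔF⟩, h0, hQ⟩ := h
  have hΔcomp : IsCompact Δ := hΔF ▸ hF.isCompact_convexHull (𝕜 := ℝ)
  have hΔ : polarDual (polarDual Δ) = Δ :=
    polarDual_polarDual (hΔF ▸ convex_convexHull ℝ F) hΔcomp.isClosed (interior_subset h0)
  have hG := hΔcomp.isBounded.finite_inter_latt
  have hK0 : (0 : Fin d → ℝ) ∈ interior (polarDual (latticeHull Δ)) :=
    polarDual_latticeHull Δ ▸ zero_mem_interior_polarDual hG
  have hKlatt : IsBounded (polarDual (latticeHull Δ) ∩ latt (Fin d)) :=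
    (isBounded_polarDual_of_mem_nhds (mem_interior_iff_mem_nhds.1 h0)).subset
      fun x hx => hQ ▸ subset_convexHull ℝ _ hx
  have hKbdd := isBounded_of_isBounded_inter_latt (convex_polarDual _) (isClosed_polarDual _)
    (mem_interior_iff_mem_nhds.1 hK0) hKlatt
  refine ⟨⟨?_, hK0, ?_⟩, ?_⟩
  · rw [polarDual_latticeHull] at hKbdd ⊢
    exact isPolytope_polarDual hG hKbdd
  · rw [hQ, hΔ, polarDual_polarDual_latticeHull hΔcomp.isBounded (interior_subset h0)]
  · rw [hQ, hΔ]

/-- If `Δ ⊆ ℝ^d` is a Q-reflexive polytope, then its dual `Δ° := [Δ]*`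
is a Q-reflexive polytope and `(Δ°)° = Δ`; thus `Δ ↦ Δ°` is an involution on the set
of Q-reflexive polytopes in `ℝ^d`. -/
theorem qreflexive_dual_involution {d : ℕ} (hd : 0 < d) (Δ : Set (Fin d → ℝ))
    (h : IsQReflexive Δ) :
    IsQReflexive (polarDual (latticeHull Δ)) ∧
      polarDual (latticeHull (polarDual (latticeHull Δ))) = Δ :=
  qreflexive_dual_involution_general Δ h
end
end

section
/- Let Δ ⊆ ℝ^d be a Q-reflexive polytope. Then: (a) the only lattice point in the interior of Δ is 0, i.e. int(Δ) ∩ ℤ^d = {0}; (b) Δ* = [Δ°] = conv(Δ° ∩ ℤ^d); (c) int(Δ*) ∩ ℤ^d = {0}. Consequently Δ* is a canonical Fano polytope, i.e. a d-dimensional lattice polytope whose only interior lattice point is 0. -/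
open Pointwise

noncomputable section

section Aux

open Bornology Metric

variable {d : ℕ}

lemma latt_zero : (0 : Fin d → ℝ) ∈ latt (Fin d) := fun _ => ⟨0, by simp⟩

lemma latt_nsmul {x : Fin d → ℝ} (hx : x ∈ latt (Fin d)) (k : ℕ) :
    ((k : ℝ) • x) ∈ latt (Fin d) := by
  intro i
  obtain ⟨m, hm⟩ := hx i
  refine ⟨(k : ℤ) * m, ?_⟩
  rw [Pi.smul_apply, smul_eq_mul, hm]
  push_cast
  ring

lemma dot_int {x y : Fin d → ℝ} (hx : x ∈ latt (Fin d)) (hy : y ∈ latt (Fin d)) :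
    ∃ m : ℤ, dot x y = (m : ℝ) := by
  choose a ha using hx
  choose b hb using hy
  refine ⟨∑ i, a i * b i, ?_⟩
  unfold dot
  push_cast
  exact Finset.sum_congr rfl fun i _ => by rw [ha i, hb i]

lemma dot_smul_left (c : ℝ) (x y : Fin d → ℝ) : dot (c • x) y = c * dot x y := by
  unfold dot
  rw [Finset.mul_sum]
  exact Finset.sum_congr rfl fun i _ => by simp [mul_assoc]

lemma dot_smul_right (c : ℝ) (x y : Fin d → ℝ) : dot x (c • y) = c * dot x y := by
  unfold dot
  rw [Finset.mul_sum]
  exact Finset.sum_congr rfl fun i _ => by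
    simp only [Pi.smul_apply, smul_eq_mul]; ring

lemma isLinearMap_dot_left (v : Fin d → ℝ) : IsLinearMap ℝ (fun y => dot v y) := by
  constructor
  · intro a b; unfold dot; rw [← Finset.sum_add_distrib]
    exact Finset.sum_congr rfl fun i _ => by simp [mul_add]
  · intro c y; exact dot_smul_right c v y

lemma isLinearMap_dot_right (w : Fin d → ℝ) : IsLinearMap ℝ (fun x => dot x w) := by
  constructor
  · intro a b; unfold dot; rw [← Finset.sum_add_distrib]
    exact Finset.sum_congr rfl fun i _ => by simp [add_mul]
  · intro c x; exact dot_smul_left c x w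

lemma dot_self_pos {v : Fin d → ℝ} (hv : v ≠ 0) : 0 < dot v v := by
  obtain ⟨i, hi⟩ := Function.ne_iff.mp hv
  have : (0 : ℝ) < v i * v i := mul_self_pos.mpr hi
  exact Finset.sum_pos' (fun j _ => mul_self_nonneg _) ⟨i, Finset.mem_univ i, this⟩

lemma abs_dot_le (x y : Fin d → ℝ) : |dot x y| ≤ d * ‖x‖ * ‖y‖ := by
  unfold dot
  calc |∑ i, x i * y i| ≤ ∑ i, |x i * y i| := Finset.abs_sum_le_sum_abs _ _
    _ ≤ ∑ _i : Fin d, ‖x‖ * ‖y‖ := Finset.sum_le_sum fun i _ => by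
        rw [abs_mul]
        exact mul_le_mul (norm_le_pi_norm x i) (norm_le_pi_norm y i) (abs_nonneg _)
          (norm_nonneg _)
    _ = d * ‖x‖ * ‖y‖ := by simp [Finset.sum_const, mul_assoc]

lemma zero_mem_interior_polarDual_s4 {S : Set (Fin d → ℝ)} (hS : IsBounded S) :
    0 ∈ interior (polarDual S) := by
  obtain ⟨R, hR⟩ := hS.subset_closedBall 0
  set R' : ℝ := |R| + 1 with hR'
  have hR'pos : 0 < R' := by positivity
  have hd0 : (0 : ℝ) ≤ d := Nat.cast_nonneg d
  have hsub : S ⊆ closedBall 0 R' := hR.trans (closedBall_subset_closedBall (by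
    calc R ≤ |R| := le_abs_self R
      _ ≤ R' := by simp [hR']))
  refine mem_interior.mpr ⟨ball 0 (1 / (d * R' + 1)), ?_, isOpen_ball, ?_⟩
  · intro y hy x hx
    have hxR : ‖x‖ ≤ R' := by simpa using hsub hx
    have hyR : ‖y‖ ≤ 1 / (d * R' + 1) := le_of_lt (by simpa using hy)
    have habs := abs_dot_le x y
    have h1 : (d : ℝ) * ‖x‖ * ‖y‖ ≤ d * R' * (1 / (d * R' + 1)) := by
      have := mul_le_mul (mul_le_mul_of_nonneg_left hxR hd0) hyR (norm_nonneg y)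
        (mul_nonneg hd0 hR'pos.le)
      linarith
    have h2 : (d : ℝ) * R' * (1 / (d * R' + 1)) < 1 := by
      rw [mul_one_div, div_lt_one (by positivity)]
      linarith
    have := neg_abs_le (dot x y)
    linarith
  · simp only [mem_ball, dist_zero_right, norm_zero]
    positivity

lemma isBounded_polarDual {S : Set (Fin d → ℝ)} (hS : 0 ∈ interior S) :
    IsBounded (polarDual S) := by
  obtain ⟨r, hr, hball⟩ := Metric.mem_nhds_iff.mp (mem_interior_iff_mem_nhds.mp hS)
  have hsub : polarDual S ⊆ closedBall 0 (2 / r) := by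
    intro y hy
    simp only [mem_closedBall, dist_zero_right]
    rw [pi_norm_le_iff_of_nonneg (by positivity)]
    intro i
    have key : ∀ s : ℝ, |s| = 1 → s * y i = |y i| → |y i| ≤ 2 / r := by
      intro s hsabs hsy
      set x : Fin d → ℝ := fun j => if j = i then -(r / 2) * s else 0 with hx
      have hxball : x ∈ ball (0 : Fin d → ℝ) r := by
        simp only [mem_ball, dist_zero_right]
        have hle : ‖x‖ ≤ r / 2 := by
          rw [pi_norm_le_iff_of_nonneg (by positivity)]
          intro j
          by_cases hj : j = i
          · rw [hx]; simp only [if_pos hj]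
            rw [Real.norm_eq_abs, abs_mul, hsabs, mul_one, abs_neg,
              abs_of_pos (by linarith : (0:ℝ) < r / 2)]
          · rw [hx]; simp only [if_neg hj, norm_zero]; positivity
        linarith
      have hdot : dot x y = -(r / 2) * |y i| := by
        unfold dot
        rw [Finset.sum_eq_single i]
        · have hxi : x i = -(r / 2) * s := by simp [hx]
          rw [hxi, ← hsy]; ring
        · intro j _ hj
          have hxj : x j = 0 := by simp [hx, hj]
          rw [hxj, zero_mul]
        · intro hi; exact absurd (Finset.mem_univ i) hi
      have h1 := hy x (hball hxball)
      rw [hdot] at h1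
      rw [le_div_iff₀ hr]
      nlinarith
    rcases le_or_gt 0 (y i) with hyi | hyi
    · simpa using key 1 (by simp) (by rw [abs_of_nonneg hyi]; ring)
    · simpa using key (-1) (by simp) (by rw [abs_of_neg hyi]; ring)
  exact (isBounded_closedBall).subset hsub

lemma exists_gt_one_smul_mem {S : Set (Fin d → ℝ)} {x : Fin d → ℝ}
    (hx : x ∈ interior S) (hx0 : x ≠ 0) : ∃ t : ℝ, 1 < t ∧ t • x ∈ S := by
  obtain ⟨r, hr, hball⟩ := Metric.mem_nhds_iff.mp (mem_interior_iff_mem_nhds.mp hx)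
  have hxn : 0 < ‖x‖ := norm_pos_iff.mpr hx0
  have hpos : 0 < r / (2 * ‖x‖) := by positivity
  refine ⟨1 + r / (2 * ‖x‖), by linarith, hball ?_⟩
  simp only [mem_ball]
  have heq : (1 + r / (2 * ‖x‖)) • x - x = (r / (2 * ‖x‖)) • x := by
    module
  rw [dist_eq_norm, heq, norm_smul, Real.norm_eq_abs, abs_of_pos (by positivity)]
  have : r / (2 * ‖x‖) * ‖x‖ = r / 2 := by
    field_simp
  rw [this]
  linarith

lemma latt_finite_of_bounded {S : Set (Fin d → ℝ)} (hS : IsBounded S)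
    (hlatt : S ⊆ latt (Fin d)) : S.Finite := by
  obtain ⟨R, hR⟩ := hS.subset_closedBall 0
  have hsub : S ⊆ (fun m : Fin d → ℤ => fun i => (m i : ℝ)) ''
      (Set.pi Set.univ fun _ => (Set.Icc (-⌈|R|⌉) ⌈|R|⌉ : Set ℤ)) := by
    intro x hxS
    choose m hm using hlatt hxS
    refine ⟨m, fun i _ => ?_, by funext i; exact (hm i).symm⟩
    have hx : ‖x‖ ≤ R := by simpa using hR hxS
    have h1 : |x i| ≤ |R| := (norm_le_pi_norm x i).trans (hx.trans (le_abs_self R))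
    rw [hm i] at h1
    have hceil : |R| ≤ (⌈|R|⌉ : ℝ) := Int.le_ceil _
    constructor
    · have h2 : ((-⌈|R|⌉ : ℤ) : ℝ) ≤ (m i : ℝ) := by
        push_cast
        linarith [neg_abs_le ((m i : ℝ))]
      exact_mod_cast h2
    · have h3 : ((m i : ℝ)) ≤ ((⌈|R|⌉ : ℤ) : ℝ) := by
        linarith [le_abs_self ((m i : ℝ))]
      exact_mod_cast h3
  exact Set.Finite.subset (Set.Finite.image _ (Set.Finite.pi fun _ => Set.finite_Icc _ _)) hsub

end Aux

/-- Let `Δ ⊆ ℝ^d` be a Q-reflexive polytope. Then: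
(a) `int(Δ) ∩ ℤ^d = {0}`; (b) `Δ* = [Δ°]` where `Δ° = [Δ]*`;
(c) `int(Δ*) ∩ ℤ^d = {0}`. Consequently `Δ*` is a canonical Fano polytope,
i.e. a `d`-dimensional lattice polytope whose only interior lattice point is `0`. -/
theorem qreflexive_properties {d : ℕ} (hd : 0 < d) (Δ : Set (Fin d → ℝ))
    (h : IsQReflexive Δ) :
    interior Δ ∩ latt (Fin d) = {0} ∧
    polarDual Δ = latticeHull (polarDual (latticeHull Δ)) ∧
    interior (polarDual Δ) ∩ latt (Fin d) = {0} ∧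
    (IsLatticePolytope (polarDual Δ) ∧ 0 ∈ interior (polarDual Δ) ∧
      interior (polarDual Δ) ∩ latt (Fin d) = {0}) := by
  obtain ⟨⟨F, hF, hΔF⟩, h0, heq⟩ := h
  have hconv : Convex ℝ Δ := by rw [hΔF]; exact convex_convexHull ℝ F
  have hbdd : Bornology.IsBounded Δ := by
    rw [hΔF]; exact isBounded_convexHull.mpr hF.isBounded
  have hDbdd : Bornology.IsBounded (polarDual Δ) := isBounded_polarDual h0
  have h0star : 0 ∈ interior (polarDual Δ) := zero_mem_interior_polarDual_s4 hbdd
  have hLsub : latticeHull Δ ⊆ Δ := convexHull_min Set.inter_subset_left hconv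
  have hkey : polarDual (latticeHull Δ) ∩ latt (Fin d) ⊆ polarDual Δ := by
    intro y hy
    rw [← heq]
    exact subset_convexHull ℝ _ hy
  -- (a)
  have claimA : interior Δ ∩ latt (Fin d) = {0} := by
    apply Set.eq_singleton_iff_unique_mem.mpr
    refine ⟨⟨h0, latt_zero⟩, ?_⟩
    rintro v ⟨hvint, hvlatt⟩
    by_contra hv0
    obtain ⟨t, ht1, htv⟩ := exists_gt_one_smul_mem hvint hv0
    have hvL : v ∈ latticeHull Δ :=
      subset_convexHull ℝ _ ⟨interior_subset hvint, hvlatt⟩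
    have step : ∀ y ∈ polarDual (latticeHull Δ) ∩ latt (Fin d), (0:ℝ) ≤ dot v y := by
      rintro y ⟨hyC, hylatt⟩
      obtain ⟨m, hm⟩ := dot_int hvlatt hylatt
      have h1 : -1 ≤ t * dot v y := by
        have := hkey ⟨hyC, hylatt⟩ (t • v) htv
        rwa [dot_smul_left] at this
      have h2 : (-1 : ℝ) < dot v y := by
        rcases le_or_gt 0 (dot v y) with hc | hc
        · linarith
        · nlinarith
      rw [hm] at h2 ⊢
      have h3 : (-1 : ℤ) < m := by exact_mod_cast h2
      exact_mod_cast (by omega : (0:ℤ) ≤ m)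
    have hull : ∀ y ∈ polarDual Δ, (0:ℝ) ≤ dot v y := by
      intro y hy
      rw [← heq] at hy
      exact convexHull_min step (convex_halfSpace_ge (isLinearMap_dot_left v) 0) hy
    obtain ⟨r, hr, hball⟩ := Metric.mem_nhds_iff.mp (mem_interior_iff_mem_nhds.mp h0star)
    have hvn : 0 < ‖v‖ := norm_pos_iff.mpr hv0
    have hδpos : 0 < r / (2 * ‖v‖) := by positivity
    have hmem : (-(r / (2 * ‖v‖))) • v ∈ polarDual Δ := by
      apply hball
      simp only [Metric.mem_ball, dist_zero_right, norm_smul, Real.norm_eq_abs]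
      rw [abs_neg, abs_of_pos hδpos]
      have : r / (2 * ‖v‖) * ‖v‖ = r / 2 := by field_simp
      rw [this]
      linarith
    have hge := hull _ hmem
    rw [dot_smul_right] at hge
    nlinarith [dot_self_pos hv0]
  -- (c)
  have claimC : interior (polarDual Δ) ∩ latt (Fin d) = {0} := by
    apply Set.eq_singleton_iff_unique_mem.mpr
    refine ⟨⟨h0star, latt_zero⟩, ?_⟩
    rintro w ⟨hwint, hwlatt⟩
    by_contra hw0
    obtain ⟨t, ht1, htw⟩ := exists_gt_one_smul_mem hwint hw0
    have step : ∀ x ∈ Δ ∩ latt (Fin d), (0:ℝ) ≤ dot x w := by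
      rintro x ⟨hxΔ, hxlatt⟩
      obtain ⟨m, hm⟩ := dot_int hxlatt hwlatt
      have h1 : -1 ≤ t * dot x w := by
        have := htw x hxΔ
        rwa [dot_smul_right] at this
      have h2 : (-1 : ℝ) < dot x w := by
        rcases le_or_gt 0 (dot x w) with hc | hc
        · linarith
        · nlinarith
      rw [hm] at h2 ⊢
      have h3 : (-1 : ℤ) < m := by exact_mod_cast h2
      exact_mod_cast (by omega : (0:ℤ) ≤ m)
    have hull : ∀ x ∈ latticeHull Δ, (0:ℝ) ≤ dot x w := fun x hx =>
      convexHull_min step (convex_halfSpace_ge (isLinearMap_dot_right w) 0) hx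
    have hmul : ∀ k : ℕ, ((k:ℝ) • w) ∈ polarDual Δ := by
      intro k
      apply hkey
      refine ⟨?_, latt_nsmul hwlatt k⟩
      intro x hx
      rw [dot_smul_right]
      have h4 : 0 ≤ (k:ℝ) * dot x w := mul_nonneg (Nat.cast_nonneg k) (hull x hx)
      linarith
    obtain ⟨R, hR⟩ := hDbdd.subset_closedBall 0
    have hwn : 0 < ‖w‖ := norm_pos_iff.mpr hw0
    obtain ⟨k, hk⟩ := exists_nat_gt (R / ‖w‖)
    have h1 : ‖(k:ℝ) • w‖ ≤ R := by simpa using hR (hmul k)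
    rw [norm_smul, Real.norm_eq_abs, abs_of_nonneg (Nat.cast_nonneg k)] at h1
    rw [div_lt_iff₀ hwn] at hk
    linarith
  have hlatpoly : IsLatticePolytope (polarDual Δ) := by
    refine ⟨polarDual (latticeHull Δ) ∩ latt (Fin d), ?_, Set.inter_subset_right, heq.symm⟩
    exact latt_finite_of_bounded (hDbdd.subset hkey) Set.inter_subset_right
  exact ⟨claimA, heq.symm, claimC, hlatpoly, h0star, claimC⟩
end
end
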